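/- arXiv:2507.05449 — 2 statements merged into one kernel-verified Lean document; each statement's English description precedes it below -/
import Mathlib

section
/- Let $A_i, B_i \subseteq [N]$ be pairs of disjoint subsets for $i$ in an index set $I$, and for disjoint $A,B \subseteq [N]$ define the partition cone $C(A,B) = \mathrm{cone}\{e_i - e_j : i \in A, j \in B\} \subseteq \mathbb{R}^N$ (with $C(A,B)=\{0\}$ if $A$ or $B$ is empty). Then $\bigcap_{i \in I} C(A_i,B_i) = C(\bigcap_i A_i, \bigcap_i B_i)$. -/
open NNReal

/-- The standard basis vector `e i` of `ℝ^N`. -/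
noncomputable def stdBasis {N : ℕ} (i : Fin N) : Fin N → ℝ := Pi.single i 1

/-- The partition cone `C(A,B) = cone {e i - e j : i ∈ A, j ∈ B}`, the set of
nonnegative linear combinations (so `C(A,B) = {0}` if `A` or `B` is empty). -/
noncomputable def partitionCone {N : ℕ} (A B : Set (Fin N)) : Set (Fin N → ℝ) :=
  (Submodule.span ℝ≥0 {x | ∃ i ∈ A, ∃ j ∈ B, x = stdBasis i - stdBasis j} : Set (Fin N → ℝ))

/-!
For any `A B`, the cone `C(A,B)` consists exactly of the zero-sum vectors that are `≤ 0` off `A`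
and `≥ 0` off `B`; the theorem follows because these conditions commute with intersections.
Such a vector `x` lies in the cone because, with `S = ∑ x⁺ = ∑ x⁻`,
`S • x = ∑ a b, (x⁺ a * x⁻ b) • (e a - e b)`, and a nonzero coefficient forces `a ∈ A`, `b ∈ B`.
-/

theorem sum_negPart_eq_sum_posPart {ι α : Type*} [Fintype ι] [AddCommGroup α] [Lattice α]
    [IsOrderedAddMonoid α] {x : ι → α} (hx : ∑ k, x k = 0) :
    ∑ k, x⁻ k = ∑ k, x⁺ k := by
  rw [eq_comm, ← sub_eq_zero, ← Finset.sum_sub_distrib, ← hx]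
  simp only [Pi.posPart_apply, Pi.negPart_apply, posPart_sub_negPart]

theorem sum_sum_mul_smul_single_sub_single {ι R : Type*} [Fintype ι] [DecidableEq ι]
    [CommRing R] (p n : ι → R) :
    ∑ a, ∑ b, (p a * n b) • (Pi.single a 1 - Pi.single b 1 : ι → R) =
      (∑ b, n b) • p - (∑ a, p a) • n := by
  ext k
  simp [Finset.sum_apply, Pi.single_apply, mul_sub, Finset.sum_sub_distrib, ← Finset.mul_sum,
    ← Finset.sum_mul, mul_comm]

namespace partitionCone

variable {N : ℕ} {A B : Set (Fin N)} {x : Fin N → ℝ}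

theorem zero_mem : (0 : Fin N → ℝ) ∈ partitionCone A B :=
  Submodule.zero_mem _

theorem stdBasis_sub_mem {a b : Fin N} (ha : a ∈ A) (hb : b ∈ B) :
    stdBasis a - stdBasis b ∈ partitionCone A B :=
  Submodule.subset_span ⟨a, ha, b, hb, rfl⟩

theorem smul_mem {c : ℝ} (hc : 0 ≤ c) (hx : x ∈ partitionCone A B) :
    c • x ∈ partitionCone A B :=
  Submodule.smul_mem _ (⟨c, hc⟩ : ℝ≥0) hx

theorem sum_mem {ι : Type*} {s : Finset ι} {f : ι → Fin N → ℝ}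
    (hf : ∀ i ∈ s, f i ∈ partitionCone A B) : ∑ i ∈ s, f i ∈ partitionCone A B :=
  Submodule.sum_mem _ hf

theorem sign_conditions_of_mem (hx : x ∈ partitionCone A B) :
    (∀ k ∉ A, x k ≤ 0) ∧ (∀ k ∉ B, 0 ≤ x k) ∧ ∑ k, x k = 0 := by
  induction hx using Submodule.span_induction with
  | mem y hy =>
    obtain ⟨i, hi, j, hj, rfl⟩ := hy
    refine ⟨fun k hk => ?_, fun k hk => ?_, by simp [stdBasis, Finset.sum_sub_distrib]⟩
    · simp [stdBasis, Pi.single_apply, show k ≠ i by rintro rfl; exact hk hi]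
      split_ifs <;> norm_num
    · simp [stdBasis, Pi.single_apply, show k ≠ j by rintro rfl; exact hk hj]
      split_ifs <;> norm_num
  | zero => simp
  | add y z _ _ hy hz =>
    refine ⟨fun k hk => ?_, fun k hk => ?_, ?_⟩
    · simpa using add_nonpos (hy.1 k hk) (hz.1 k hk)
    · simpa using add_nonneg (hy.2.1 k hk) (hz.2.1 k hk)
    · simp [Finset.sum_add_distrib, hy.2.2, hz.2.2]
  | smul c y _ hy =>
    refine ⟨fun k hk => ?_, fun k hk => ?_, ?_⟩
    · simpa [NNReal.smul_def] using mul_nonpos_of_nonneg_of_nonpos c.2 (hy.1 k hk)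
    · simpa [NNReal.smul_def] using mul_nonneg c.2 (hy.2.1 k hk)
    · simp [NNReal.smul_def, ← Finset.mul_sum, hy.2.2]

theorem sum_posPart_smul_mem (hA : ∀ k ∉ A, x k ≤ 0) (hB : ∀ k ∉ B, 0 ≤ x k)
    (hsum : ∑ k, x k = 0) : (∑ k, x⁺ k) • x ∈ partitionCone A B := by
  have hterm : ∀ a b, (x⁺ a * x⁻ b) • (stdBasis a - stdBasis b) ∈ partitionCone A B := by
    intro a b
    by_cases ha : a ∈ A
    · by_cases hb : b ∈ B
      · exact smul_mem (mul_nonneg (posPart_nonneg _) (negPart_nonneg _)) (stdBasis_sub_mem ha hb)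
      · simpa [negPart_eq_zero.2 (hB b hb)] using zero_mem
    · simpa [posPart_eq_zero.2 (hA a ha)] using zero_mem
  have hsum_mem : ∑ a, ∑ b, (x⁺ a * x⁻ b) • (Pi.single a 1 - Pi.single b 1 : Fin N → ℝ) ∈
      partitionCone A B :=
    sum_mem fun a _ => sum_mem fun b _ => hterm a b
  rwa [sum_sum_mul_smul_single_sub_single, sum_negPart_eq_sum_posPart hsum, ← smul_sub,
    posPart_sub_negPart] at hsum_mem

theorem mem_of_sign_conditions (hA : ∀ k ∉ A, x k ≤ 0) (hB : ∀ k ∉ B, 0 ≤ x k)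
    (hsum : ∑ k, x k = 0) : x ∈ partitionCone A B := by
  have hS : 0 ≤ ∑ k, x⁺ k := Fintype.sum_nonneg (posPart_nonneg x)
  rcases hS.eq_or_lt with hS0 | hSpos
  · have hpos : x⁺ = 0 := (Fintype.sum_eq_zero_iff_of_nonneg (posPart_nonneg x)).1 hS0.symm
    have hneg : x⁻ = 0 := (Fintype.sum_eq_zero_iff_of_nonneg (negPart_nonneg x)).1
      ((sum_negPart_eq_sum_posPart hsum).trans hS0.symm)
    rw [← posPart_sub_negPart x, hpos, hneg, sub_zero]
    exact zero_mem
  · have := smul_mem (inv_nonneg.2 hS) (sum_posPart_smul_mem hA hB hsum)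
    rwa [smul_smul, inv_mul_cancel₀ hSpos.ne', one_smul] at this

theorem eq_setOf : partitionCone A B =
    {x | (∀ k ∉ A, x k ≤ 0) ∧ (∀ k ∉ B, 0 ≤ x k) ∧ ∑ k, x k = 0} :=
  Set.ext fun _ => ⟨sign_conditions_of_mem, fun ⟨hA, hB, hsum⟩ => mem_of_sign_conditions hA hB hsum⟩

end partitionCone

theorem partition_cone_intersection_general {N : ℕ} {I : Type*} [Nonempty I]
    (A B : I → Set (Fin N)) :
    ⋂ i, partitionCone (A i) (B i) = partitionCone (⋂ i, A i) (⋂ i, B i) := by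
  ext x
  simp only [partitionCone.eq_setOf, Set.mem_iInter, Set.mem_ofPred_eq, not_forall, forall_and,
    forall_exists_index, forall_const]
  exact and_congr forall_comm (and_congr_left' forall_comm)

theorem partition_cone_intersection {N : ℕ} {I : Type*} [Nonempty I]
    (A B : I → Set (Fin N)) (hdisj : ∀ i, Disjoint (A i) (B i)) :
    ⋂ i, partitionCone (A i) (B i) = partitionCone (⋂ i, A i) (⋂ i, B i) :=
  partition_cone_intersection_general A B
end

section
/- Let $x_1,\dots,x_N \in \mathbb{R}^d$ and let $A,B \subseteq [N]$ be disjoint nonempty sets. Let $V = \{\alpha \in \mathbb{R}^N : \sum_i \alpha_i x_i = 0 \text{ and } \sum_i \alpha_i = 0\}$. Then $\mathrm{conv}\{x_i : i \in A\} \cap \mathrm{conv}\{x_j : j \in B\} \neq \emptyset$ if and only if $F(A,B) \cap V \neq \emptyset$, where $F(A,B) = \mathrm{conv}\{e_i - e_j : i \in A, j \in B\} \subseteq \mathbb{R}^N$. -/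
/-!
Let `L α = ∑ i, α i • x i` and `Δ_A = conv {e i : i ∈ A}`. Then `conv {x i : i ∈ A} = L '' Δ_A`
and `F(A,B) = Δ_A - Δ_B`, so a common point `L a = L b` of the two hulls is the same thing as a
point `a - b` of `F(A,B)` in the kernel of `L`. The condition `∑ i, α i = 0` holds on all of
`F(A,B)`, because `Δ_A` and `Δ_B` lie in the hyperplane `∑ i, α i = 1`.
-/

open NNReal

/-- The partition face `F(A,B) = conv {e i - e j : i ∈ A, j ∈ B}`. -/
noncomputable def partitionFace {N : ℕ} (A B : Finset (Fin N)) : Set (Fin N → ℝ) :=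
  convexHull ℝ {x | ∃ i ∈ A, ∃ j ∈ B, x = stdBasis i - stdBasis j}

open scoped Pointwise

theorem Set.image_inter_image_nonempty_iff_exists_sub_mem_ker {E G 𝓕 : Type*} [AddGroup E]
    [AddGroup G] [FunLike 𝓕 E G] [AddMonoidHomClass 𝓕 E G] (f : 𝓕) (s t : Set E) :
    (f '' s ∩ f '' t).Nonempty ↔ ∃ α ∈ s - t, f α = 0 := by
  constructor
  · rintro ⟨_, ⟨a, ha, rfl⟩, ⟨b, hb, hab⟩⟩
    exact ⟨a - b, Set.sub_mem_sub ha hb, by rw [map_sub, hab, sub_self]⟩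
  · rintro ⟨_, ⟨a, ha, b, hb, rfl⟩, hab⟩
    rw [map_sub, sub_eq_zero] at hab
    exact ⟨f a, ⟨a, ha, rfl⟩, ⟨b, hb, hab.symm⟩⟩

theorem sum_eq_one_of_mem_convexHull_stdBasis {N : ℕ} {s : Set (Fin N)} {α : Fin N → ℝ}
    (hα : α ∈ convexHull ℝ (stdBasis '' s)) : ∑ i, α i = 1 := by
  refine convexHull_min ?_ (convex_hyperplane ?_ 1) hα
  · rintro _ ⟨i, -, rfl⟩
    simp [stdBasis]
  · exact ⟨fun _ _ => Finset.sum_add_distrib, fun _ _ => Finset.mul_sum .. |>.symm⟩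

theorem partitionFace_eq_sub {N : ℕ} (A B : Finset (Fin N)) :
    partitionFace A B = convexHull ℝ (stdBasis '' A) - convexHull ℝ (stdBasis '' B) := by
  rw [partitionFace, ← convexHull_sub]
  congr 1
  ext α
  simp only [Set.mem_ofPred_eq, Set.mem_sub, Set.mem_image, Finset.mem_coe]
  grind

theorem sum_eq_zero_of_mem_partitionFace {N : ℕ} {A B : Finset (Fin N)} {α : Fin N → ℝ}
    (hα : α ∈ partitionFace A B) : ∑ i, α i = 0 := by
  rw [partitionFace_eq_sub] at hα
  obtain ⟨a, ha, b, hb, rfl⟩ := hα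
  simp only [Pi.sub_apply, Finset.sum_sub_distrib, sum_eq_one_of_mem_convexHull_stdBasis ha,
    sum_eq_one_of_mem_convexHull_stdBasis hb, sub_self]

theorem convexHull_image_eq_image_convexHull_stdBasis {N : ℕ} {E : Type*} [AddCommGroup E]
    [Module ℝ E] (x : Fin N → E) (s : Set (Fin N)) :
    convexHull ℝ (x '' s) = Fintype.linearCombination ℝ x '' convexHull ℝ (stdBasis '' s) := by
  rw [LinearMap.image_convexHull, Set.image_image]
  simp [stdBasis]

theorem radon_partition_iff_face_meets_V_general {N d : ℕ} (x : Fin N → (Fin d → ℝ))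
    (A B : Finset (Fin N)) :
    (convexHull ℝ (x '' A) ∩ convexHull ℝ (x '' B)).Nonempty ↔
      (partitionFace A B ∩
        {α : Fin N → ℝ | ∑ i, α i • x i = 0 ∧ ∑ i, α i = 0}).Nonempty := by
  rw [convexHull_image_eq_image_convexHull_stdBasis x,
    convexHull_image_eq_image_convexHull_stdBasis x,
    Set.image_inter_image_nonempty_iff_exists_sub_mem_ker, ← partitionFace_eq_sub]
  exact ⟨fun ⟨α, hF, hα⟩ => ⟨α, hF, hα, sum_eq_zero_of_mem_partitionFace hF⟩,
    fun ⟨α, hF, hα, _⟩ => ⟨α, hF, hα⟩⟩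

theorem radon_partition_iff_face_meets_V {N d : ℕ} (x : Fin N → (Fin d → ℝ))
    (A B : Finset (Fin N)) (hAB : Disjoint A B) (hA : A.Nonempty) (hB : B.Nonempty) :
    (convexHull ℝ (x '' A) ∩ convexHull ℝ (x '' B)).Nonempty ↔
      (partitionFace A B ∩
        {α : Fin N → ℝ | ∑ i, α i • x i = 0 ∧ ∑ i, α i = 0}).Nonempty :=
  radon_partition_iff_face_meets_V_general x A B
end
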